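/- For every symmetric n×n matrix B over 𝔽₂ there exist an n×n permutation matrix P, an n×n lower-triangular matrix L over 𝔽₂ with all diagonal entries equal to 1, and an n×n symmetric matrix D over 𝔽₂ such that PᵀBP = L·D·Lᵀ, where D is block-diagonal with diagonal blocks that are either 1×1 blocks or 2×2 blocks equal to [[0,1],[1,0]]; concretely, D is tridiagonal with D_{i,i+1} = D_{i+1,i} for all i, and whenever D_{i,i+1} = 1 one has D_{i,i} = D_{i+1,i+1} = 0, D_{i−1,i} = 0 and D_{i+1,i+2} = 0 (whenever those indices exist). Moreover, if B has zero diagonal (is alternating), then D can be taken with zero diagonal. -/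
import Mathlib

open Matrix

/-- `D` is block-diagonal with diagonal blocks that are either `1×1` or the
`2×2` block `[[0,1],[1,0]]`: concretely, `D` is symmetric, tridiagonal, and
whenever an off-diagonal entry `D i (i+1)` equals `1`, the adjacent diagonal
entries and the neighboring off-diagonal entries vanish. -/
def IsCanonBlockDiag {n : ℕ} (D : Matrix (Fin n) (Fin n) (ZMod 2)) : Prop :=
  D.IsSymm ∧
  (∀ i j : Fin n, (i.1 + 1 < j.1 ∨ j.1 + 1 < i.1) → D i j = 0) ∧
  (∀ i j : Fin n, i.1 + 1 = j.1 → D i j = 1 →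
    D i i = 0 ∧ D j j = 0 ∧
    (∀ k : Fin n, k.1 + 1 = i.1 → D k i = 0) ∧
    (∀ k : Fin n, j.1 + 1 = k.1 → D j k = 0))

def Concl (n : ℕ) (B : Matrix (Fin n) (Fin n) (ZMod 2)) : Prop :=
  ∃ (π : Equiv.Perm (Fin n)) (L D : Matrix (Fin n) (Fin n) (ZMod 2)),
    (∀ i j : Fin n, i < j → L i j = 0) ∧ (∀ i : Fin n, L i i = 1) ∧ IsCanonBlockDiag D ∧
    B.submatrix π π = L * D * Lᵀ ∧ ((∀ i, B i i = 0) → ∀ i, D i i = 0)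

def extPerm {m : ℕ} (π : Equiv.Perm (Fin m)) : Equiv.Perm (Fin (m+1)) where
  toFun := Fin.cases 0 (fun a => (π a).succ)
  invFun := Fin.cases 0 (fun a => (π⁻¹ a).succ)
  left_inv x := by cases x using Fin.cases <;> simp
  right_inv x := by cases x using Fin.cases <;> simp

@[simp] lemma extPerm_zero {m : ℕ} (π : Equiv.Perm (Fin m)) : extPerm π 0 = 0 := rfl
@[simp] lemma extPerm_succ {m : ℕ} (π : Equiv.Perm (Fin m)) (a : Fin m) :
    extPerm π a.succ = (π a).succ := rfl

lemma step1 (m : ℕ) (M : Matrix (Fin (m+1)) (Fin (m+1)) (ZMod 2)) (hM : M.IsSymm)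
    (h00 : M 0 0 = 1) (IH : ∀ S : Matrix (Fin m) (Fin m) (ZMod 2), S.IsSymm → Concl m S) :
    Concl (m+1) M := by
  have hsym : ∀ i j, M i j = M j i := fun i j => by
    conv_lhs => rw [← hM]
    rfl
  set S : Matrix (Fin m) (Fin m) (ZMod 2) :=
    Matrix.of (fun a b => M a.succ b.succ + M a.succ 0 * M 0 b.succ) with hS
  have hSsymm : S.IsSymm := by
    ext a b
    simp only [S, Matrix.transpose_apply, Matrix.of_apply]
    rw [hsym b.succ a.succ, hsym b.succ 0, hsym 0 a.succ]
    ring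
  obtain ⟨π', L', D', hL'low, hL'diag, hD', hfac, halt⟩ := IH S hSsymm
  set c : Fin m → ZMod 2 := fun a => M (π' a).succ 0 with hc
  set L : Matrix (Fin (m+1)) (Fin (m+1)) (ZMod 2) :=
    Matrix.of (Fin.cons (Fin.cons 1 (fun _ => 0)) (fun a => Fin.cons (c a) (fun b => L' a b))) with hL
  set D : Matrix (Fin (m+1)) (Fin (m+1)) (ZMod 2) :=
    Matrix.of (Fin.cons (Fin.cons 1 (fun _ => 0)) (fun a => Fin.cons 0 (fun b => D' a b))) with hD
  refine ⟨extPerm π', L, D, ?_, ?_, ?_, ?_, ?_⟩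
  · intro i j hij
    cases i using Fin.cases with
    | zero => cases j using Fin.cases with
      | zero => exact absurd hij (lt_irrefl _)
      | succ b => simp [hL]
    | succ a => cases j using Fin.cases with
      | zero => exact absurd hij (by simp [Fin.lt_def])
      | succ b => simpa [hL] using hL'low a b (by exact Fin.succ_lt_succ_iff.mp hij)
  · intro i
    cases i using Fin.cases with
    | zero => simp [hL]
    | succ a => simpa [hL] using hL'diag a
  · -- IsCanonBlockDiag D
    obtain ⟨hD'symm, hD'far, hD'blk⟩ := hD'
    have hD'symm' : ∀ a b, D' a b = D' b a := fun a b => by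
      conv_lhs => rw [← hD'symm]
      rfl
    refine ⟨?_, ?_, ?_⟩
    · ext i j
      simp only [Matrix.transpose_apply]
      cases i using Fin.cases with
      | zero => cases j using Fin.cases with
        | zero => rfl
        | succ b => simp [hD]
      | succ a => cases j using Fin.cases with
        | zero => simp [hD]
        | succ b => simp [hD, hD'symm' a b]
    · intro i j h
      cases i using Fin.cases with
      | zero => cases j using Fin.cases with
        | zero => simp at h
        | succ b => simp [hD]
      | succ a => cases j using Fin.cases with
        | zero => simp [hD]
        | succ b =>
          simp only [Fin.val_succ] at h
          simpa [hD] using hD'far a b (by omega)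
    · intro i j hij h1
      cases i using Fin.cases with
      | zero => cases j using Fin.cases with
        | zero => simp at hij
        | succ b =>
          rw [show D 0 b.succ = 0 by simp [hD]] at h1
          exact absurd h1 (by decide)
      | succ a => cases j using Fin.cases with
        | zero => simp [Fin.val_succ] at hij
        | succ b =>
          have hab : a.1 + 1 = b.1 := by simp only [Fin.val_succ] at hij; omega
          have h1' : D' a b = 1 := by simpa [hD] using h1
          obtain ⟨e1, e2, e3, e4⟩ := hD'blk a b hab h1'
          refine ⟨by simpa [hD] using e1, by simpa [hD] using e2, ?_, ?_⟩
          · intro k hk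
            cases k using Fin.cases with
            | zero => simp [hD]
            | succ k' =>
              simp only [Fin.val_succ] at hk
              simpa [hD] using e3 k' (by omega)
          · intro k hk
            cases k using Fin.cases with
            | zero => simp [Fin.val_succ] at hk
            | succ k' =>
              simp only [Fin.val_succ] at hk
              simpa [hD] using e4 k' (by omega)
  · -- factorization
    have hfac' : ∀ a b, (L' * D' * L'ᵀ) a b = S (π' a) (π' b) := by
      intro a b
      conv_lhs => rw [← hfac]
      rfl
    have expand' : ∀ (a b : Fin m), (L' * D' * L'ᵀ) a b
        = ∑ l, (∑ k, L' a k * D' k l) * L' b l := by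
      intro a b
      simp [Matrix.mul_apply, Matrix.transpose_apply]
    have hLD : ∀ x y, (L * D * Lᵀ) x y
        = L x 0 * L y 0 + ∑ l, (∑ k, L x k.succ * D' k l) * L y l.succ := by
      intro x y
      simp only [Matrix.mul_apply, Matrix.transpose_apply, Fin.sum_univ_succ, hD,
        Matrix.of_apply, Fin.cons_zero, Fin.cons_succ, mul_zero, zero_mul, mul_one,
        add_zero, zero_add, Finset.sum_const_zero]
    ext x y
    rw [Matrix.submatrix_apply, hLD]
    cases x using Fin.cases with
    | zero => cases y using Fin.cases with
      | zero => simp [hL, extPerm_zero, h00]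
      | succ b =>
        simp only [extPerm_zero, extPerm_succ]
        rw [hsym 0 ((π' b).succ)]
        simp [hL, hc]
    | succ a => cases y using Fin.cases with
      | zero =>
        simp only [extPerm_zero, extPerm_succ]
        simp [hL, hc]
      | succ b =>
        simp only [extPerm_succ]
        have : ∑ l, (∑ k, L a.succ k.succ * D' k l) * L b.succ l.succ
            = (L' * D' * L'ᵀ) a b := by
          rw [expand']
          simp [hL]
        rw [this, hfac' a b]
        simp only [hS, Matrix.of_apply, hL, Fin.cons_succ, Fin.cons_zero, hc]
        rw [hsym 0 ((π' b).succ)]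
        exact (by decide : ∀ u v : ZMod 2, u = v + (u + v)) _ _
  · intro hM0
    exact absurd (hM0 0) (by rw [h00]; exact one_ne_zero)

lemma step2 (m : ℕ) (M : Matrix (Fin (m+2)) (Fin (m+2)) (ZMod 2)) (hM : M.IsSymm)
    (hdg : ∀ x, M x x = 0) (h01 : M 0 1 = 1)
    (IH : ∀ S : Matrix (Fin m) (Fin m) (ZMod 2), S.IsSymm → Concl m S) :
    Concl (m+2) M := by
  have hsym : ∀ i j, M i j = M j i := fun i j => by
    conv_lhs => rw [← hM]
    rfl
  set S : Matrix (Fin m) (Fin m) (ZMod 2) :=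
    Matrix.of (fun a b => M a.succ.succ b.succ.succ
      + M a.succ.succ 0 * M 1 b.succ.succ + M a.succ.succ 1 * M 0 b.succ.succ) with hS
  have hSsymm : S.IsSymm := by
    ext a b
    simp only [S, Matrix.transpose_apply, Matrix.of_apply]
    rw [hsym b.succ.succ a.succ.succ, hsym b.succ.succ 0, hsym 1 a.succ.succ,
      hsym b.succ.succ 1, hsym 0 a.succ.succ]
    ring
  obtain ⟨π', L', D', hL'low, hL'diag, hD', hfac, halt⟩ := IH S hSsymm
  set u : Fin m → ZMod 2 := fun a => M (π' a).succ.succ 1 with hu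
  set v : Fin m → ZMod 2 := fun a => M (π' a).succ.succ 0 with hv
  set L : Matrix (Fin (m+2)) (Fin (m+2)) (ZMod 2) :=
    Matrix.of (Fin.cons (Fin.cons 1 (Fin.cons 0 (fun _ => 0)))
      (Fin.cons (Fin.cons 0 (Fin.cons 1 (fun _ => 0)))
        (fun a => Fin.cons (u a) (Fin.cons (v a) (fun b => L' a b))))) with hL
  set D : Matrix (Fin (m+2)) (Fin (m+2)) (ZMod 2) :=
    Matrix.of (Fin.cons (Fin.cons 0 (Fin.cons 1 (fun _ => 0)))
      (Fin.cons (Fin.cons 1 (Fin.cons 0 (fun _ => 0)))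
        (fun a => Fin.cons 0 (Fin.cons 0 (fun b => D' a b))))) with hD
  refine ⟨extPerm (extPerm π'), L, D, ?_, ?_, ?_, ?_, ?_⟩
  · intro i j hij
    cases i using Fin.cases with
    | zero => cases j using Fin.cases with
      | zero => exact absurd hij (lt_irrefl _)
      | succ b => cases b using Fin.cases with
        | zero => simp [hL]
        | succ b' => simp [hL]
    | succ a => cases a using Fin.cases with
      | zero => cases j using Fin.cases with
        | zero => exact absurd hij (by simp [Fin.lt_def])
        | succ b => cases b using Fin.cases with
          | zero => exact absurd hij (by simp [Fin.lt_def])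
          | succ b' => simp [hL]
      | succ a' => cases j using Fin.cases with
        | zero => exact absurd hij (by simp [Fin.lt_def])
        | succ b => cases b using Fin.cases with
          | zero => exact absurd hij (by simp [Fin.lt_def])
          | succ b' =>
            have : a' < b' := by
              simp only [Fin.lt_def, Fin.val_succ] at hij ⊢
              omega
            simpa [hL] using hL'low a' b' this
  · intro i
    cases i using Fin.cases with
    | zero => simp [hL]
    | succ a => cases a using Fin.cases with
      | zero => simp [hL]
      | succ a' => simpa [hL] using hL'diag a'
  · obtain ⟨hD'symm, hD'far, hD'blk⟩ := hD'
    have hD'symm' : ∀ a b, D' a b = D' b a := fun a b => by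
      conv_lhs => rw [← hD'symm]
      rfl
    refine ⟨?_, ?_, ?_⟩
    · ext i j
      simp only [Matrix.transpose_apply]
      cases i using Fin.cases with
      | zero => cases j using Fin.cases with
        | zero => rfl
        | succ b => cases b using Fin.cases with
          | zero => simp [hD]
          | succ b' => simp [hD]
      | succ a => cases a using Fin.cases with
        | zero => cases j using Fin.cases with
          | zero => simp [hD]
          | succ b => cases b using Fin.cases with
            | zero => rfl
            | succ b' => simp [hD]
        | succ a' => cases j using Fin.cases with
          | zero => simp [hD]
          | succ b => cases b using Fin.cases with
            | zero => simp [hD]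
            | succ b' => simp [hD, hD'symm' a' b']
    · intro i j h
      cases i using Fin.cases with
      | zero => cases j using Fin.cases with
        | zero => simp at h
        | succ b => cases b using Fin.cases with
          | zero => simp [Fin.val_succ] at h
          | succ b' => simp [hD]
      | succ a => cases a using Fin.cases with
        | zero => cases j using Fin.cases with
          | zero => simp [Fin.val_succ] at h
          | succ b => cases b using Fin.cases with
            | zero => simp [Fin.val_succ] at h
            | succ b' => simp [hD]
        | succ a' => cases j using Fin.cases with
          | zero => simp [hD]
          | succ b => cases b using Fin.cases with
            | zero => simp [hD]
            | succ b' =>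
              simp only [Fin.val_succ] at h
              simpa [hD] using hD'far a' b' (by omega)
    · intro i j hij h1
      cases i using Fin.cases with
      | zero => cases j using Fin.cases with
        | zero => simp at hij
        | succ b => cases b using Fin.cases with
          | zero =>
            -- the (0,1) block
            refine ⟨by simp [hD], by simp [hD], ?_, ?_⟩
            · intro k hk
              simp at hk
            · intro k hk
              cases k using Fin.cases with
              | zero => simp [Fin.val_succ] at hk
              | succ k' => cases k' using Fin.cases with
                | zero => simp [Fin.val_succ] at hk
                | succ k'' => simp [hD]
          | succ b' =>
            rw [show D 0 b'.succ.succ = 0 by simp [hD]] at h1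
            exact absurd h1 (by decide)
      | succ a => cases a using Fin.cases with
        | zero => cases j using Fin.cases with
          | zero => simp [Fin.val_succ] at hij
          | succ b => cases b using Fin.cases with
            | zero => simp [Fin.val_succ] at hij
            | succ b' =>
              rw [show D (0:Fin (m+1)).succ b'.succ.succ = 0 by simp [hD]] at h1
              exact absurd h1 (by decide)
        | succ a' => cases j using Fin.cases with
          | zero => simp [Fin.val_succ] at hij
          | succ b => cases b using Fin.cases with
            | zero => simp [Fin.val_succ] at hij
            | succ b' =>
              have hab : a'.1 + 1 = b'.1 := by
                simp only [Fin.val_succ] at hij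
                omega
              have h1' : D' a' b' = 1 := by simpa [hD] using h1
              obtain ⟨e1, e2, e3, e4⟩ := hD'blk a' b' hab h1'
              refine ⟨by simpa [hD] using e1, by simpa [hD] using e2, ?_, ?_⟩
              · intro k hk
                cases k using Fin.cases with
                | zero => simp [Fin.val_succ] at hk
                | succ k' => cases k' using Fin.cases with
                  | zero => simp [hD]
                  | succ k'' =>
                    simp only [Fin.val_succ] at hk
                    simpa [hD] using e3 k'' (by omega)
              · intro k hk
                cases k using Fin.cases with
                | zero => simp [Fin.val_succ] at hk
                | succ k' => cases k' using Fin.cases with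
                  | zero => simp [Fin.val_succ] at hk
                  | succ k'' =>
                    simp only [Fin.val_succ] at hk
                    simpa [hD] using e4 k'' (by omega)
  · -- factorization
    have hfac' : ∀ a b, (L' * D' * L'ᵀ) a b = S (π' a) (π' b) := by
      intro a b
      conv_lhs => rw [← hfac]
      rfl
    have expand' : ∀ (a b : Fin m), (L' * D' * L'ᵀ) a b
        = ∑ l, (∑ k, L' a k * D' k l) * L' b l := by
      intro a b
      simp [Matrix.mul_apply, Matrix.transpose_apply]
    have hone : (1 : Fin (m+2)) = (0 : Fin (m+1)).succ := Fin.succ_zero_eq_one.symm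
    have hLD : ∀ x y, (L * D * Lᵀ) x y
        = L x 0 * L y 1 + L x 1 * L y 0
          + ∑ l, (∑ k, L x k.succ.succ * D' k l) * L y l.succ.succ := by
      intro x y
      simp only [Matrix.mul_apply, Matrix.transpose_apply, Fin.sum_univ_succ, hD,
        Matrix.of_apply, Fin.cons_zero, Fin.cons_succ, mul_zero, zero_mul, mul_one,
        add_zero, zero_add, Finset.sum_const_zero, Fin.succ_zero_eq_one]
      ring
    have h01' : M 0 ((0 : Fin (m+1)).succ) = 1 := by
      rw [Fin.succ_zero_eq_one]; exact h01
    have h10' : M ((0 : Fin (m+1)).succ) 0 = 1 := by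
      rw [hsym]; exact h01'
    have hu' : ∀ b, M (π' b).succ.succ ((0 : Fin (m+1)).succ) = u b := by
      intro b; rw [Fin.succ_zero_eq_one, hu]
    have hsym0 : ∀ b, M 0 ((π' b).succ.succ) = v b := by
      intro b; rw [hsym, hv]
    have hsym1 : ∀ b, M ((0 : Fin (m+1)).succ) ((π' b).succ.succ) = u b := by
      intro b; rw [hsym]; exact hu' b
    ext x y
    rw [Matrix.submatrix_apply, hLD]
    cases x using Fin.cases with
    | zero => cases y using Fin.cases with
      | zero =>
        simp [extPerm_zero, hL, hone, hdg, -Fin.succ_zero_eq_one, -Fin.succ_zero_eq_one', -Fin.succ_zero_eq_one']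
      | succ b => cases b using Fin.cases with
        | zero =>
          simp [extPerm_zero, extPerm_succ, hL, hone, h01', -Fin.succ_zero_eq_one, -Fin.succ_zero_eq_one', -Fin.succ_zero_eq_one']
        | succ b' =>
          simp [extPerm_zero, extPerm_succ, hL, hone, hsym0, hv, -Fin.succ_zero_eq_one, -Fin.succ_zero_eq_one', -Fin.succ_zero_eq_one']
    | succ a => cases a using Fin.cases with
      | zero => cases y using Fin.cases with
        | zero =>
          simp [extPerm_zero, extPerm_succ, hL, hone, h10', -Fin.succ_zero_eq_one, -Fin.succ_zero_eq_one', -Fin.succ_zero_eq_one']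
        | succ b => cases b using Fin.cases with
          | zero =>
            simp [extPerm_succ, hL, hone, hdg, -Fin.succ_zero_eq_one, -Fin.succ_zero_eq_one', -Fin.succ_zero_eq_one']
          | succ b' =>
            simp [extPerm_succ, hL, hone, hsym1, hu, -Fin.succ_zero_eq_one, -Fin.succ_zero_eq_one', -Fin.succ_zero_eq_one']
      | succ a' => cases y using Fin.cases with
        | zero =>
          simp [extPerm_zero, extPerm_succ, hL, hone, hu, hv, -Fin.succ_zero_eq_one, -Fin.succ_zero_eq_one', -Fin.succ_zero_eq_one']
        | succ b => cases b using Fin.cases with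
          | zero =>
            simp [extPerm_succ, hL, hone, hu', hv, -Fin.succ_zero_eq_one, -Fin.succ_zero_eq_one', -Fin.succ_zero_eq_one']
          | succ b' =>
            simp only [extPerm_succ]
            have hsum : ∑ l, (∑ k, L a'.succ.succ k.succ.succ * D' k l) * L b'.succ.succ l.succ.succ
                = (L' * D' * L'ᵀ) a' b' := by
              rw [expand']
              simp [hL]
            rw [hsum, hfac' a' b']
            simp only [hS, Matrix.of_apply]
            rw [hsym 1 ((π' b').succ.succ), hsym 0 ((π' b').succ.succ)]
            simp only [hL, hone, Matrix.of_apply, Fin.cons_succ, Fin.cons_zero]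
            rw [hu' a', hu' b',
              show M (π' a').succ.succ 0 = v a' from rfl,
              show M (π' b').succ.succ 0 = v b' from rfl]
            exact (by decide : ∀ p q r s t : ZMod 2,
              t = p * s + q * r + (t + q * r + p * s)) _ _ _ _ _
  · intro _ i
    cases i using Fin.cases with
    | zero => simp [hD]
    | succ a => cases a using Fin.cases with
      | zero => simp [hD]
      | succ a' =>
        have hS0 : ∀ x, S x x = 0 := by
          intro x
          simp only [hS, Matrix.of_apply, hdg, zero_add]
          rw [hsym 1 x.succ.succ, hsym 0 x.succ.succ]
          exact (by decide : ∀ p q : ZMod 2, p * q + q * p = 0) _ _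
        simpa [hD] using halt hS0 a'

lemma permConj {n : ℕ} (σ : Equiv.Perm (Fin n)) (B : Matrix (Fin n) (Fin n) (ZMod 2)) :
    (σ.permMatrix (ZMod 2))ᵀ * B * σ.permMatrix (ZMod 2) = B.submatrix ⇑σ⁻¹ ⇑σ⁻¹ := by
  have h1 : (σ.permMatrix (ZMod 2))ᵀ = (σ⁻¹).permMatrix (ZMod 2) := by
    rw [Equiv.Perm.permMatrix, Equiv.Perm.permMatrix, ← PEquiv.toMatrix_symm, ← Equiv.toPEquiv_symm]
    rfl
  rw [h1, Equiv.Perm.permMatrix, Equiv.Perm.permMatrix, PEquiv.toMatrix_toPEquiv_mul,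
    PEquiv.mul_toMatrix_toPEquiv]
  ext i j
  simp [Matrix.submatrix]

lemma key : ∀ n (B : Matrix (Fin n) (Fin n) (ZMod 2)), B.IsSymm → Concl n B := by
  intro n
  induction n using Nat.strong_induction_on with
  | _ n IH =>
    intro B hB
    have hsymB : ∀ i j, B i j = B j i := fun i j => by
      conv_lhs => rw [← hB]
      rfl
    by_cases hd : ∃ i, B i i = 1
    · obtain ⟨i, hi⟩ := hd
      obtain ⟨m, rfl⟩ : ∃ m, n = m + 1 := ⟨n - 1, by have := i.pos; omega⟩
      set τ := Equiv.swap (0 : Fin (m+1)) i with hτ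
      have hMs : (B.submatrix ⇑τ ⇑τ).IsSymm := by
        ext a b
        simp only [Matrix.transpose_apply, Matrix.submatrix_apply]
        exact hsymB _ _
      have h00 : (B.submatrix ⇑τ ⇑τ) 0 0 = 1 := by
        rw [Matrix.submatrix_apply, hτ, Equiv.swap_apply_left]
        exact hi
      obtain ⟨π, L, D, h1, h2, h3, h4, h5⟩ :=
        step1 m _ hMs h00 (fun S hS => IH m (by omega) S hS)
      refine ⟨π.trans τ, L, D, h1, h2, h3, ?_, ?_⟩
      · rw [show ⇑(π.trans τ) = ⇑τ ∘ ⇑π from rfl, ← Matrix.submatrix_submatrix]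
        exact h4
      · intro hB0
        exact h5 (fun x => hB0 _)
    · have hd0 : ∀ i, B i i = 0 := by
        intro i
        rcases (by decide : ∀ x : ZMod 2, x = 0 ∨ x = 1) (B i i) with h | h
        · exact h
        · exact absurd ⟨i, h⟩ hd
      by_cases hz : ∃ i j, B i j = 1
      · obtain ⟨i, j, hij⟩ := hz
        have hne : i ≠ j := by
          intro h
          rw [h, hd0 j] at hij
          exact absurd hij (by decide)
        have hn2 : 2 ≤ n := by
          have h1 := i.2
          have h2 := j.2
          have h3 : i.1 ≠ j.1 := fun hh => hne (Fin.ext hh)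
          omega
        obtain ⟨m, rfl⟩ : ∃ m, n = m + 2 := ⟨n - 2, by omega⟩
        set s1 := Equiv.swap (0 : Fin (m+2)) i with hs1
        set j' := s1 j with hj'
        have hj'0 : j' ≠ 0 := by
          intro h
          apply hne
          have h2 : s1 j' = j := by
            rw [hj']
            exact Equiv.swap_apply_self _ _ _
          rw [h] at h2
          rw [hs1, Equiv.swap_apply_left] at h2
          exact h2
        set s2 := Equiv.swap (1 : Fin (m+2)) j' with hs2
        set τ := s2.trans s1 with hτ
        have hτ0 : τ 0 = i := by
          rw [hτ, Equiv.trans_apply, hs2,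
            Equiv.swap_apply_of_ne_of_ne (by simp) (Ne.symm hj'0), hs1, Equiv.swap_apply_left]
        have hτ1 : τ 1 = j := by
          rw [hτ, Equiv.trans_apply, hs2, Equiv.swap_apply_left, hj', hs1,
            Equiv.swap_apply_self]
        have hMs : (B.submatrix ⇑τ ⇑τ).IsSymm := by
          ext a b
          simp only [Matrix.transpose_apply, Matrix.submatrix_apply]
          exact hsymB _ _
        have hdg : ∀ x, (B.submatrix ⇑τ ⇑τ) x x = 0 := fun x => hd0 _
        have h01 : (B.submatrix ⇑τ ⇑τ) 0 1 = 1 := by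
          rw [Matrix.submatrix_apply, hτ0, hτ1]
          exact hij
        obtain ⟨π, L, D, h1, h2, h3, h4, h5⟩ :=
          step2 m _ hMs hdg h01 (fun S hS => IH m (by omega) S hS)
        refine ⟨π.trans τ, L, D, h1, h2, h3, ?_, fun _ => h5 hdg⟩
        rw [show ⇑(π.trans τ) = ⇑τ ∘ ⇑π from rfl, ← Matrix.submatrix_submatrix]
        exact h4
      · have hB0 : B = 0 := by
          ext i j
          rcases (by decide : ∀ x : ZMod 2, x = 0 ∨ x = 1) (B i j) with h | h
          · simpa using h
          · exact absurd ⟨i, j, h⟩ hz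
        refine ⟨1, 1, 0, ?_, ?_, ?_, ?_, ?_⟩
        · intro i j hij
          exact Matrix.one_apply_ne (ne_of_lt hij)
        · intro i
          exact Matrix.one_apply_eq i
        · exact ⟨by simp [Matrix.IsSymm], fun i j _ => rfl,
            fun i j _ h1 => absurd h1 (by simp)⟩
        · rw [hB0]
          ext i j
          simp
        · intro _ i
          simp

theorem stmt_10 (n : ℕ) (B : Matrix (Fin n) (Fin n) (ZMod 2)) (hB : B.IsSymm) :
    ∃ (σ : Equiv.Perm (Fin n)) (L D : Matrix (Fin n) (Fin n) (ZMod 2)),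
      (∀ i j : Fin n, i < j → L i j = 0) ∧
      (∀ i : Fin n, L i i = 1) ∧
      IsCanonBlockDiag D ∧
      (σ.permMatrix (ZMod 2))ᵀ * B * σ.permMatrix (ZMod 2) = L * D * Lᵀ ∧
      ((∀ i, B i i = 0) → ∀ i, D i i = 0) := by
  obtain ⟨π, L, D, h1, h2, h3, h4, h5⟩ := key n B hB
  refine ⟨π⁻¹, L, D, h1, h2, h3, ?_, h5⟩
  rw [permConj, inv_inv]
  exact h4
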